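/- For the Kerr–(anti-)de Sitter black hole, for all m ≠ 0 and all (r, θ) with r² + a²cos²θ > 0, the Abdelqader–Lake invariant Q₂ = (1/27)·(I₅I₆ − I₇²)/(I₁² + I₂²)^{5/2} satisfies the closed-form identity Q₂(r, θ) = −a²sin²θ·((Λ/3)r⁴ + (a²Λ/3 − 1)r² + 2mr − a²)·(1 + (a²Λ/3)cos²θ)/((r² + a²cos²θ)m²). -/

import Mathlib

noncomputable section

namespace KerrAdS

/-- `ρ² = r² + a² cos²θ` in Boyer–Lindquist coordinates. -/
def rho2 (a r θ : ℝ) : ℝ := r ^ 2 + a ^ 2 * Real.cos θ ^ 2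

/-- The complex combination `I₁ + i I₂ = 48 m² (r − i a cos θ)⁶ / ρ¹²`
(the orientation convention `I₁ + iI₂ = 48 Ψ₂²` with `Ψ₂ = −m/(r + i a cos θ)³`). -/
def Ic (a m r θ : ℝ) : ℂ :=
  48 * (m : ℂ) ^ 2 * ((r : ℂ) - Complex.I * ((a * Real.cos θ : ℝ) : ℂ)) ^ 6 /
    ((rho2 a r θ : ℝ) : ℂ) ^ 6

/-- The Weyl invariant `I₁ = C_{αβγδ} C^{αβγδ}` of the Kerr–(anti-)de Sitter black hole. -/
def I1 (a m r θ : ℝ) : ℝ := (Ic a m r θ).re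

/-- The Chern–Pontryagin invariant `I₂ = C*_{αβγδ} C^{αβγδ}`. -/
def I2 (a m r θ : ℝ) : ℝ := (Ic a m r θ).im

/-- `Δ_r = (1 − Λr²/3)(r² + a²) − 2mr`. -/
def Δr (a m Λ r : ℝ) : ℝ := (1 - Λ * r ^ 2 / 3) * (r ^ 2 + a ^ 2) - 2 * m * r

/-- `Δ_θ = 1 + (a²Λ/3) cos²θ`. -/
def Δθ (a Λ θ : ℝ) : ℝ := 1 + a ^ 2 * Λ / 3 * Real.cos θ ^ 2

/-- The gradient invariant `I₅ = ∇_μ I₁ ∇^μ I₁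
  = (Δ_r/ρ²)(∂_r I₁)² + (Δ_θ/ρ²)(∂_θ I₁)²`. -/
def I5 (a m Λ r θ : ℝ) : ℝ :=
  Δr a m Λ r / rho2 a r θ * (deriv (fun r' => I1 a m r' θ) r) ^ 2 +
    Δθ a Λ θ / rho2 a r θ * (deriv (fun θ' => I1 a m r θ') θ) ^ 2

/-- The gradient invariant `I₆ = ∇_μ I₂ ∇^μ I₂
  = (Δ_r/ρ²)(∂_r I₂)² + (Δ_θ/ρ²)(∂_θ I₂)²`. -/
def I6 (a m Λ r θ : ℝ) : ℝ :=
  Δr a m Λ r / rho2 a r θ * (deriv (fun r' => I2 a m r' θ) r) ^ 2 +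
    Δθ a Λ θ / rho2 a r θ * (deriv (fun θ' => I2 a m r θ') θ) ^ 2

/-- The gradient invariant `I₇ = ∇_μ I₁ ∇^μ I₂
  = (Δ_r/ρ²)(∂_r I₁)(∂_r I₂) + (Δ_θ/ρ²)(∂_θ I₁)(∂_θ I₂)`. -/
def I7 (a m Λ r θ : ℝ) : ℝ :=
  Δr a m Λ r / rho2 a r θ *
      (deriv (fun r' => I1 a m r' θ) r) * (deriv (fun r' => I2 a m r' θ) r) +
    Δθ a Λ θ / rho2 a r θ *
      (deriv (fun θ' => I1 a m r θ') θ) * (deriv (fun θ' => I2 a m r θ') θ)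

/-- The ergosurface polynomial
`E = Λa⁴c⁴ − Λa⁴c² − Λa²r² − Λr⁴ + 3a²c² − 6mr + 3r²`, `c = cos θ`. -/
def E (a m Λ r θ : ℝ) : ℝ :=
  Λ * a ^ 4 * Real.cos θ ^ 4 - Λ * a ^ 4 * Real.cos θ ^ 2 - Λ * a ^ 2 * r ^ 2 - Λ * r ^ 4 +
    3 * a ^ 2 * Real.cos θ ^ 2 - 6 * m * r + 3 * r ^ 2

/-- The differential Weyl invariant `I₃ = ∇_μ C_{αβγδ} ∇^μ C^{αβγδ}`
(explicit closed form). -/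
def I3 (a m Λ r θ : ℝ) : ℝ :=
  240 * m ^ 2 / rho2 a r θ ^ 9 *
    (a ^ 4 * Real.cos θ ^ 4 - 4 * a ^ 3 * Real.cos θ ^ 3 * r
      - 6 * a ^ 2 * Real.cos θ ^ 2 * r ^ 2 + 4 * a * Real.cos θ * r ^ 3 + r ^ 4) *
    (a ^ 4 * Real.cos θ ^ 4 + 4 * a ^ 3 * Real.cos θ ^ 3 * r
      - 6 * a ^ 2 * Real.cos θ ^ 2 * r ^ 2 - 4 * a * Real.cos θ * r ^ 3 + r ^ 4) *
    E a m Λ r θ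

/-- The mixed differential Weyl invariant `I₄ = ∇_μ C_{αβγδ} ∇^μ C*^{αβγδ}`
(explicit closed form). -/
def I4 (a m Λ r θ : ℝ) : ℝ :=
  1920 * a * Real.cos θ * r * m ^ 2 / rho2 a r θ ^ 9 * E a m Λ r θ *
    (a ^ 2 * Real.cos θ ^ 2 - 2 * a * Real.cos θ * r - r ^ 2) *
    (a ^ 2 * Real.cos θ ^ 2 + 2 * a * Real.cos θ * r - r ^ 2) *
    (a ^ 2 * Real.cos θ ^ 2 - r ^ 2)

end KerrAdS

namespace KerrAdS

/-- The Abdelqader–Lake invariant `Q₂ = (1/27) (I₅I₆ − I₇²)/(I₁² + I₂²)^{5/2}`. -/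
def Q2 (a m Λ r θ : ℝ) : ℝ :=
  1 / 27 * (I5 a m Λ r θ * I6 a m Λ r θ - I7 a m Λ r θ ^ 2) /
    (I1 a m r θ ^ 2 + I2 a m r θ ^ 2) ^ ((5 : ℝ) / 2)

end KerrAdS

/-! Since `ρ² = |w|²` for `w = r + i a cos θ`, the complex invariant is
`I₁ + i I₂ = 48 m² w̄⁶ / |w|¹² = 48 m² / w⁶`, a holomorphic function of `w`. Hence
`∂_θ (I₁ + i I₂) = -i a sin θ · ∂_r (I₁ + i I₂)`, and for the diagonal inverse metric the Gram
determinant `I₅ I₆ - I₇²` equals `g^{rr} g^{θθ}` times the squared Jacobian of `(I₁, I₂)`, which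
is `a² sin²θ · |∂_r (I₁ + i I₂)|⁴ = a² sin²θ · (288 m²)⁴ / ρ²⁸`. Dividing by
`|I₁ + i I₂|⁵ = (48 m² / ρ⁶)⁵`, the constants cancel because `288 = 6 · 48` and `6⁴ = 27 · 48`. -/

theorem hasDerivAt_const_div_pow {𝕜 𝕜' : Type*} [NontriviallyNormedField 𝕜]
    [NontriviallyNormedField 𝕜'] [NormedAlgebra 𝕜 𝕜'] {γ : 𝕜 → 𝕜'} {γ' : 𝕜'} {t : 𝕜}
    (hγ : HasDerivAt γ γ' t) (h : γ t ≠ 0) (c : 𝕜') (n : ℕ) :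
    HasDerivAt (fun t => c / γ t ^ n) (-(n * c * γ') / γ t ^ (n + 1)) t := by
  convert (hasDerivAt_const t c).fun_div (hγ.fun_pow n) (pow_ne_zero n h) using 1
  rcases n with _ | n
  · simp
  · rw [Nat.add_sub_cancel]
    field_simp
    ring

theorem HasDerivAt.re {f : ℝ → ℂ} {f' : ℂ} {x : ℝ} (hf : HasDerivAt f f' x) :
    HasDerivAt (fun x => (f x).re) f'.re x :=
  Complex.reCLM.hasFDerivAt.comp_hasDerivAt x hf

theorem HasDerivAt.im {f : ℝ → ℂ} {f' : ℂ} {x : ℝ} (hf : HasDerivAt f f' x) :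
    HasDerivAt (fun x => (f x).im) f'.im x :=
  Complex.imCLM.hasFDerivAt.comp_hasDerivAt x hf

theorem Complex.normSq_ofReal_div_pow (c : ℝ) (w : ℂ) (n : ℕ) :
    Complex.normSq (c / w ^ n) = c ^ 2 / Complex.normSq w ^ n := by
  rw [map_div₀, map_pow, Complex.normSq_ofReal, sq]

theorem diag_gram_det (A B p₁ p₂ q₁ q₂ : ℝ) :
    (A * p₁ ^ 2 + B * q₁ ^ 2) * (A * p₂ ^ 2 + B * q₂ ^ 2) - (A * p₁ * p₂ + B * q₁ * q₂) ^ 2 =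
      A * B * (p₁ * q₂ - p₂ * q₁) ^ 2 := by
  ring

namespace KerrAdS

open Complex ComplexConjugate

def kerrW (a r θ : ℝ) : ℂ := r + (a * Real.cos θ : ℝ) * I

lemma rho2_eq_normSq_kerrW (a r θ : ℝ) : rho2 a r θ = normSq (kerrW a r θ) := by
  rw [kerrW, normSq_add_mul_I, rho2]
  ring

/-- At `kerrW a r θ = 0` both sides are `0` (division by zero). -/
lemma Ic_eq_div_kerrW_pow (a m r θ : ℝ) :
    Ic a m r θ = ((48 * m ^ 2 : ℝ) : ℂ) / kerrW a r θ ^ 6 := by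
  have hconj : (r : ℂ) - I * ((a * Real.cos θ : ℝ) : ℂ) = conj (kerrW a r θ) := by
    simp only [kerrW, map_add, map_mul, conj_ofReal, conj_I]
    ring
  rw [Ic, hconj, rho2_eq_normSq_kerrW, ← mul_conj]
  rcases eq_or_ne (kerrW a r θ) 0 with hw | hw
  · simp [hw]
  · have : conj (kerrW a r θ) ≠ 0 := (map_ne_zero _).2 hw
    push_cast
    field_simp

lemma hasDerivAt_kerrW_r (a r θ : ℝ) : HasDerivAt (fun r' => kerrW a r' θ) 1 r := by
  unfold kerrW
  simpa using (hasDerivAt_id r).ofReal_comp.add_const (((a * Real.cos θ : ℝ) : ℂ) * I)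

lemma hasDerivAt_kerrW_θ (a r θ : ℝ) :
    HasDerivAt (fun θ' => kerrW a r θ') ((-(a * Real.sin θ) : ℝ) * I) θ :=
  (((Real.hasDerivAt_cos θ).const_mul a).ofReal_comp.mul_const I).const_add (r : ℂ)
    |>.congr_deriv (by rw [mul_neg])

section
variable {a m r θ : ℝ}

lemma hasDerivAt_Ic_r (hw : kerrW a r θ ≠ 0) :
    HasDerivAt (fun r' => Ic a m r' θ) (((-(288 * m ^ 2) : ℝ) : ℂ) / kerrW a r θ ^ 7) r := by
  simp only [Ic_eq_div_kerrW_pow]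
  exact (hasDerivAt_const_div_pow (hasDerivAt_kerrW_r a r θ) hw _ 6).congr_deriv
    (by push_cast; ring)

lemma hasDerivAt_Ic_θ (hw : kerrW a r θ ≠ 0) :
    HasDerivAt (fun θ' => Ic a m r θ')
      ((-(a * Real.sin θ) : ℝ) * I * (((-(288 * m ^ 2) : ℝ) : ℂ) / kerrW a r θ ^ 7)) θ := by
  simp only [Ic_eq_div_kerrW_pow]
  exact (hasDerivAt_const_div_pow (hasDerivAt_kerrW_θ a r θ) hw _ 6).congr_deriv
    (by push_cast; ring)

lemma I5_mul_I6_sub_I7_sq {Λ s : ℝ} {V : ℂ} (hr : HasDerivAt (fun r' => Ic a m r' θ) V r)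
    (hθ : HasDerivAt (fun θ' => Ic a m r θ') (s * I * V) θ) :
    I5 a m Λ r θ * I6 a m Λ r θ - I7 a m Λ r θ ^ 2 =
      Δr a m Λ r / rho2 a r θ * (Δθ a Λ θ / rho2 a r θ) * (s * normSq V) ^ 2 := by
  simp only [I5, I6, I7, I1, I2, hr.re.deriv, hr.im.deriv, hθ.re.deriv, hθ.im.deriv]
  rw [diag_gram_det, normSq_apply]
  simp only [mul_re, mul_im, ofReal_re, ofReal_im, I_re, I_im]
  ring

lemma I1_sq_add_I2_sq : I1 a m r θ ^ 2 + I2 a m r θ ^ 2 = (48 * m ^ 2 / rho2 a r θ ^ 3) ^ 2 := by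
  rw [I1, I2, sq, sq, ← normSq_apply, Ic_eq_div_kerrW_pow, normSq_ofReal_div_pow,
    ← rho2_eq_normSq_kerrW]
  ring

end

/-- For the Kerr–(anti-)de Sitter black hole with `m ≠ 0`, the
Abdelqader–Lake invariant `Q₂` has the stated closed form. -/
theorem Q2_closed_form (a m Λ : ℝ) (hm : m ≠ 0) (r θ : ℝ) (h : 0 < rho2 a r θ) :
    Q2 a m Λ r θ =
      -(a ^ 2 * Real.sin θ ^ 2 *
          (Λ / 3 * r ^ 4 + (a ^ 2 * Λ / 3 - 1) * r ^ 2 + 2 * m * r - a ^ 2) *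
          (1 + a ^ 2 * Λ / 3 * Real.cos θ ^ 2)) /
        (rho2 a r θ * m ^ 2) := by
  have hw : kerrW a r θ ≠ 0 := by
    rw [← normSq_pos, ← rho2_eq_normSq_kerrW]
    exact h
  rw [Q2, I5_mul_I6_sub_I7_sq (hasDerivAt_Ic_r hw) (hasDerivAt_Ic_θ hw), I1_sq_add_I2_sq,
    Real.rpow_div_two_eq_sqrt _ (by positivity), Real.sqrt_sq (by positivity), Real.rpow_ofNat,
    normSq_ofReal_div_pow, ← rho2_eq_normSq_kerrW, Δr, Δθ]
  field_simp
  ring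

end KerrAdS
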